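/- Non-uniqueness counterexample: let α ∈ (0,1), C > 1, and define β(r) = |r−1|^α for r ∈ [0,C], β(r) = |C−1|^α for r ≥ C, β(r) = 1 for r ≤ 0. Then β is bounded and uniformly continuous with β(1) = 0, and the integral equation φ(t) = exp(∫₀ᵗ β(φ(r)) dr) on [0,∞) admits at least two distinct solutions: the constant φ ≡ 1, and φ(t) = F^{−1}(t), where F(u) = ∫₁ᵘ dr/(r β(r)) is a homeomorphism from [1,∞) onto [0,∞) (using that ∫₁^∞ dr/(r β(r)) = ∞). -/

import Mathlib

open Set

noncomputable section

def betaFn (α C : ℝ) (r : ℝ) : ℝ :=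
  if r ≤ 0 then 1 else if r ≤ C then |r - 1| ^ α else |C - 1| ^ α

namespace Stmt15Aux

lemma beta_eq {α C : ℝ} (hC : (0:ℝ) < C) (r : ℝ) :
    betaFn α C r = |max 0 (min C r) - 1| ^ α := by
  unfold betaFn
  rcases le_or_gt r 0 with h | h
  · rw [if_pos h, min_eq_right (h.trans hC.le), max_eq_left h]
    norm_num [Real.one_rpow]
  · rw [if_neg (not_le.2 h)]
    rcases le_or_gt r C with h2 | h2
    · rw [if_pos h2, min_eq_right h2, max_eq_right h.le]
    · rw [if_neg (not_le.2 h2), min_eq_left h2.le, max_eq_right hC.le]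

lemma continuous_rpowAbs {α : ℝ} (hα : 0 < α) : Continuous fun s : ℝ => |s - 1| ^ α := by
  rw [continuous_iff_continuousAt]
  intro s
  exact (Real.continuousAt_rpow_const _ _ (Or.inr hα.le)).comp
    ((continuous_abs.comp (continuous_sub_right 1)).continuousAt)

lemma continuous_betaFn {α C : ℝ} (hα : 0 < α) (hC : (0:ℝ) < C) :
    Continuous (betaFn α C) := by
  have h : betaFn α C = fun r => |max 0 (min C r) - 1| ^ α := funext (beta_eq hC)
  rw [h]
  exact (continuous_rpowAbs hα).comp
    (continuous_const.max (continuous_const.min continuous_id))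

lemma uc_betaFn {α C : ℝ} (hα : 0 < α) (hC : (0:ℝ) < C) :
    UniformContinuous (betaFn α C) := by
  have hcomp : betaFn α C =
      (fun s : Icc (0:ℝ) C => |(s:ℝ) - 1| ^ α) ∘ projIcc 0 C hC.le := by
    funext r
    rw [beta_eq hC r]
    rfl
  rw [hcomp]
  exact (CompactSpace.uniformContinuous_of_continuous
      ((continuous_rpowAbs hα).comp continuous_subtype_val)).comp
    (LipschitzWith.projIcc hC.le).uniformContinuous

lemma beta_one {α C : ℝ} (hα : 0 < α) (hC : 1 < C) : betaFn α C 1 = 0 := by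
  unfold betaFn
  rw [if_neg (by norm_num), if_pos hC.le]
  norm_num [Real.zero_rpow hα.ne']

lemma beta_nonneg {α C : ℝ} (r : ℝ) : 0 ≤ betaFn α C r := by
  unfold betaFn
  split_ifs
  · norm_num
  · exact Real.rpow_nonneg (abs_nonneg _) _
  · exact Real.rpow_nonneg (abs_nonneg _) _

lemma beta_ne {α C : ℝ} (hC : 1 < C) (r : ℝ) (hr : r ≠ 1) : betaFn α C r ≠ 0 := by
  unfold betaFn
  split_ifs
  · norm_num
  · exact (Real.rpow_pos_of_pos (abs_pos.2 (sub_ne_zero.2 hr)) _).ne'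
  · exact (Real.rpow_pos_of_pos (abs_pos.2 (by intro h; nlinarith [sub_eq_zero.1 h])) _).ne'

lemma beta_pos {α C : ℝ} (hC : 1 < C) {r : ℝ} (hr : 1 < r) : 0 < betaFn α C r :=
  (beta_nonneg r).lt_of_ne' (beta_ne hC r hr.ne')

lemma beta_bdd {α C : ℝ} (hα : 0 < α) (hC : 1 < C) (r : ℝ) :
    |betaFn α C r| ≤ max 1 (C ^ α) := by
  rw [abs_of_nonneg (beta_nonneg r)]
  unfold betaFn
  split_ifs with h1 h2
  · exact le_max_left _ _
  · refine le_trans ?_ (le_max_right _ _)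
    apply Real.rpow_le_rpow (abs_nonneg _) _ hα.le
    rw [abs_le]
    constructor <;> nlinarith
  · refine le_trans ?_ (le_max_right _ _)
    apply Real.rpow_le_rpow (abs_nonneg _) _ hα.le
    rw [abs_le]
    constructor <;> nlinarith

open MeasureTheory intervalIntegral in
lemma f_meas {α C : ℝ} (hα : 0 < α) (hC : (0:ℝ) < C) :
    Measurable fun r : ℝ => (r * betaFn α C r)⁻¹ :=
  ((continuous_id.mul (continuous_betaFn hα hC)).measurable).inv

lemma f_pos {α C : ℝ} (hC : 1 < C) {r : ℝ} (hr : 1 < r) :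
    0 < (r * betaFn α C r)⁻¹ :=
  inv_pos.2 (mul_pos (by linarith) (beta_pos hC hr))

open MeasureTheory in
lemma f_intble {α C : ℝ} (hα : α ∈ Ioo (0:ℝ) 1) (hC : 1 < C) {b : ℝ} (hb : 1 ≤ b) :
    IntervalIntegrable (fun r => (r * betaFn α C r)⁻¹) volume 1 b := by
  set g : ℝ → ℝ := fun r => (r - 1) ^ (-α) + (C - 1) ^ (-α) with hg
  have hgint : IntervalIntegrable g volume 1 b := by
    apply IntervalIntegrable.add
    · have h := (intervalIntegral.intervalIntegrable_rpow' (a := 1 - 1) (b := b - 1)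
        (r := -α) (by linarith [hα.2])).comp_sub_right 1
      simpa using h
    · exact intervalIntegrable_const
  apply hgint.mono_fun' ((f_meas hα.1 (by linarith)).aestronglyMeasurable.restrict)
  rw [Filter.EventuallyLE, ae_restrict_iff' measurableSet_uIoc]
  refine Filter.Eventually.of_forall fun x hx => ?_
  rw [uIoc_of_le hb] at hx
  have hx1 : 1 < x := hx.1
  have hx0 : 0 < x := by linarith
  have hfx : 0 ≤ (x * betaFn α C x)⁻¹ :=
    inv_nonneg.2 (mul_nonneg hx0.le (beta_nonneg x))
  have hCn : (0:ℝ) ≤ (C - 1) ^ (-α) := Real.rpow_nonneg (by linarith) _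
  have hxn : (0:ℝ) ≤ (x - 1) ^ (-α) := Real.rpow_nonneg (by linarith) _
  simp only [Real.norm_eq_abs, abs_of_nonneg hfx]
  unfold betaFn
  rw [if_neg (not_le.2 hx0)]
  split_ifs with h2
  · -- x ≤ C
    have habs : |x - 1| = x - 1 := abs_of_pos (by linarith)
    rw [habs, hg]
    have h1 : (x - 1) ^ (-α) = ((x - 1) ^ α)⁻¹ := by
      rw [Real.rpow_neg (by linarith)]
    have hp : (0:ℝ) < (x - 1) ^ α := Real.rpow_pos_of_pos (by linarith) _
    have : (x * (x - 1) ^ α)⁻¹ ≤ ((x - 1) ^ α)⁻¹ := by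
      apply inv_anti₀ hp
      nlinarith
    simp only []
    rw [h1] at *
    linarith
  · -- C < x
    have habs : |C - 1| = C - 1 := abs_of_pos (by linarith)
    rw [habs, hg]
    have h1 : (C - 1) ^ (-α) = ((C - 1) ^ α)⁻¹ := by
      rw [Real.rpow_neg (by linarith)]
    have hp : (0:ℝ) < (C - 1) ^ α := Real.rpow_pos_of_pos (by linarith) _
    have : (x * (C - 1) ^ α)⁻¹ ≤ ((C - 1) ^ α)⁻¹ := by
      apply inv_anti₀ hp
      nlinarith
    simp only []
    rw [h1] at *
    linarith

def FC (α C : ℝ) : ℝ → ℝ := fun u => ∫ r in (1:ℝ)..u, (r * betaFn α C r)⁻¹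

open MeasureTheory intervalIntegral

lemma FC_one (α C : ℝ) : FC α C 1 = 0 := integral_same

lemma FC_strictMono {α C : ℝ} (hα : α ∈ Ioo (0:ℝ) 1) (hC : 1 < C) :
    StrictMonoOn (FC α C) (Ici 1) := by
  intro u hu v hv huv
  have hu1 : (1:ℝ) ≤ u := hu
  have hv1 : (1:ℝ) ≤ v := hv
  have h1 : IntervalIntegrable (fun r => (r * betaFn α C r)⁻¹) volume 1 u := f_intble hα hC hu1
  have h2 : IntervalIntegrable (fun r => (r * betaFn α C r)⁻¹) volume u v := by
    apply (f_intble hα hC hv1).mono_set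
    apply uIcc_subset_uIcc
    · rw [uIcc_of_le hv1]; exact ⟨hu1, huv.le⟩
    · rw [uIcc_of_le hv1]; exact ⟨hv1, le_rfl⟩
  have hadd : FC α C v = FC α C u + ∫ r in u..v, (r * betaFn α C r)⁻¹ :=
    (integral_add_adjacent_intervals h1 h2).symm
  have hpos : 0 < ∫ r in u..v, (r * betaFn α C r)⁻¹ :=
    intervalIntegral_pos_of_pos_on h2 (fun x hx => f_pos hC (lt_of_le_of_lt hu1 hx.1)) huv
  rw [hadd]; linarith

lemma FC_contOn {α C : ℝ} (hα : α ∈ Ioo (0:ℝ) 1) (hC : 1 < C) :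
    ContinuousOn (FC α C) (Ici 1) := by
  intro u hu
  have hu1 : (1:ℝ) ≤ u := hu
  have h := intervalIntegral.continuousWithinAt_primitive (μ := volume)
    (f := fun r => (r * betaFn α C r)⁻¹) (a := 1) (b₀ := u) (b₁ := 1) (b₂ := u + 1)
    (measure_singleton u) ?_
  · apply h.mono_of_mem_nhdsWithin
    have h1 : Iio (u + 1) ∈ nhdsWithin u (Ici 1) :=
      nhdsWithin_le_nhds (Iio_mem_nhds (by linarith))
    have h2 : Ici (1:ℝ) ∈ nhdsWithin u (Ici 1) := self_mem_nhdsWithin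
    filter_upwards [h1, h2] with x hx1 hx2
    exact ⟨hx2, hx1.le⟩
  · rw [min_self, max_eq_right (by linarith)]
    exact f_intble hα hC (by linarith)

lemma FC_level {α C : ℝ} (hα : α ∈ Ioo (0:ℝ) 1) (hC : 1 < C) {u : ℝ} (hu : C ≤ u) :
    FC α C u = FC α C C + (|C - 1| ^ α)⁻¹ * Real.log (u / C) := by
  set K : ℝ := |C - 1| ^ α with hK
  have hKpos : 0 < K := Real.rpow_pos_of_pos (abs_pos.2 (by intro h; nlinarith [sub_eq_zero.1 h])) _
  have hCpos : (0:ℝ) < C := by linarith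
  have heq : ∀ x ∈ uIcc C u, (x * betaFn α C x)⁻¹ = K⁻¹ * x⁻¹ := by
    intro x hx
    rw [uIcc_of_le hu] at hx
    have hxC : C ≤ x := hx.1
    have hx0 : 0 < x := lt_of_lt_of_le hCpos hxC
    have hb : betaFn α C x = K := by
      unfold betaFn
      rw [if_neg (not_le.2 hx0)]
      split_ifs with h
      · rw [le_antisymm h hxC]
      · rfl
    rw [hb, mul_inv, mul_comm]
  have hcont : ContinuousOn (fun x : ℝ => K⁻¹ * x⁻¹) (uIcc C u) := by
    apply continuousOn_const.mul
    apply ContinuousOn.inv₀ continuousOn_id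
    intro x hx
    rw [uIcc_of_le hu] at hx
    exact (lt_of_lt_of_le hCpos hx.1).ne'
  have h2 : IntervalIntegrable (fun r => (r * betaFn α C r)⁻¹) volume C u :=
    (hcont.congr heq).intervalIntegrable
  have h1 : IntervalIntegrable (fun r => (r * betaFn α C r)⁻¹) volume 1 C :=
    f_intble hα hC hC.le
  rw [FC, ← integral_add_adjacent_intervals h1 h2]
  congr 1
  rw [integral_congr heq, intervalIntegral.integral_const_mul,
    integral_inv_of_pos hCpos (lt_of_lt_of_le hCpos hu)]

lemma FC_tendsto {α C : ℝ} (hα : α ∈ Ioo (0:ℝ) 1) (hC : 1 < C) :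
    Filter.Tendsto (FC α C) Filter.atTop Filter.atTop := by
  set K : ℝ := |C - 1| ^ α with hK
  have hKpos : 0 < K := Real.rpow_pos_of_pos (abs_pos.2 (by intro h; nlinarith [sub_eq_zero.1 h])) _
  have hCpos : (0:ℝ) < C := by linarith
  have hlim : Filter.Tendsto (fun u => FC α C C + K⁻¹ * Real.log (u / C))
      Filter.atTop Filter.atTop := by
    apply Filter.tendsto_atTop_add_const_left
    apply Filter.Tendsto.const_mul_atTop (inv_pos.2 hKpos)
    exact Real.tendsto_log_atTop.comp (Filter.tendsto_id.atTop_div_const hCpos)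
  apply hlim.congr'
  filter_upwards [Filter.eventually_ge_atTop C] with u hu
  exact (FC_level hα hC hu).symm

lemma FC_image {α C : ℝ} (hα : α ∈ Ioo (0:ℝ) 1) (hC : 1 < C) :
    FC α C '' Ici 1 = Ici 0 := by
  apply subset_antisymm
  · rintro y ⟨u, hu, rfl⟩
    have hu1 : (1:ℝ) ≤ u := hu
    rcases eq_or_lt_of_le hu1 with h | h
    · rw [← h, FC_one]; exact self_mem_Ici
    · have := FC_strictMono hα hC (self_mem_Ici) hu h
      rw [FC_one] at this
      exact mem_Ici.2 this.le
  · intro y hy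
    obtain ⟨u, hu1, hu2⟩ := ((FC_tendsto hα hC).eventually_ge_atTop y).and
      (Filter.eventually_ge_atTop C) |>.exists
    have h1u : (1:ℝ) ≤ u := by linarith
    have hmem : y ∈ Icc (FC α C 1) (FC α C u) := ⟨by rw [FC_one]; exact hy, hu1⟩
    obtain ⟨x, hx, hfx⟩ := intermediate_value_Icc h1u
      ((FC_contOn hα hC).mono Icc_subset_Ici_self) hmem
    exact ⟨x, hx.1, hfx⟩

lemma FC_hasDeriv {α C : ℝ} (hα : α ∈ Ioo (0:ℝ) 1) (hC : 1 < C) {u : ℝ} (hu : 1 < u) :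
    HasDerivAt (FC α C) ((u * betaFn α C u)⁻¹) u := by
  apply intervalIntegral.integral_hasDerivAt_right (f_intble hα hC hu.le)
  · exact ⟨univ, Filter.univ_mem,
      ((f_meas hα.1 (by linarith)).aestronglyMeasurable).restrict⟩
  · apply ContinuousAt.inv₀
    · exact (continuous_id.mul (continuous_betaFn hα.1 (by linarith))).continuousAt
    · exact (mul_pos (by linarith) (beta_pos hC hu)).ne'

def eIso {α C : ℝ} (hα : α ∈ Ioo (0:ℝ) 1) (hC : 1 < C) : (Ici (1:ℝ)) ≃o (Ici (0:ℝ)) :=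
  (StrictMonoOn.orderIso (FC α C) (Ici 1) (FC_strictMono hα hC)).trans
    (OrderIso.setCongr _ _ (FC_image hα hC))

lemma eIso_apply {α C : ℝ} (hα : α ∈ Ioo (0:ℝ) 1) (hC : 1 < C) (u : Ici (1:ℝ)) :
    (eIso hα hC u : ℝ) = FC α C u := rfl

def phi (α C : ℝ) (hα : α ∈ Ioo (0:ℝ) 1) (hC : 1 < C) : ℝ → ℝ :=
  fun t => if ht : 0 ≤ t then ((eIso hα hC).symm ⟨t, ht⟩ : ℝ) else 1

lemma phi_mem {α C : ℝ} (hα : α ∈ Ioo (0:ℝ) 1) (hC : 1 < C) {t : ℝ} (ht : 0 ≤ t) :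
    1 ≤ phi α C hα hC t := by
  rw [phi, dif_pos ht]
  exact ((eIso hα hC).symm ⟨t, ht⟩).2

lemma FC_phi {α C : ℝ} (hα : α ∈ Ioo (0:ℝ) 1) (hC : 1 < C) {t : ℝ} (ht : 0 ≤ t) :
    FC α C (phi α C hα hC t) = t := by
  rw [phi, dif_pos ht]
  have h := congrArg Subtype.val ((eIso hα hC).apply_symm_apply ⟨t, ht⟩)
  rw [eIso_apply hα hC] at h
  exact h

lemma phi_zero {α C : ℝ} (hα : α ∈ Ioo (0:ℝ) 1) (hC : 1 < C) : phi α C hα hC 0 = 1 := by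
  apply (FC_strictMono hα hC).injOn (phi_mem hα hC le_rfl) self_mem_Ici
  rw [FC_phi hα hC le_rfl, FC_one]

lemma phi_contOn {α C : ℝ} (hα : α ∈ Ioo (0:ℝ) 1) (hC : 1 < C) :
    ContinuousOn (phi α C hα hC) (Ici 0) := by
  rw [continuousOn_iff_continuous_restrict]
  have h : (Ici (0:ℝ)).domRestrict (phi α C hα hC) =
      fun t : Ici (0:ℝ) => ((eIso hα hC).symm t : ℝ) := by
    funext t
    simp only [domRestrict_apply, phi, Subtype.coe_eta]
    exact dif_pos t.2
  rw [h]
  haveI : OrdConnected (Ici (1:ℝ)) := ordConnected_Ici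
  haveI : OrdConnected (Ici (0:ℝ)) := ordConnected_Ici
  exact continuous_subtype_val.comp (OrderIso.continuous _)

lemma phi_gt_one {α C : ℝ} (hα : α ∈ Ioo (0:ℝ) 1) (hC : 1 < C) {t : ℝ} (ht : 0 < t) :
    1 < phi α C hα hC t := by
  rcases eq_or_lt_of_le (phi_mem hα hC ht.le) with h | h
  · exfalso
    have := FC_phi hα hC ht.le
    rw [← h, FC_one] at this
    linarith
  · exact h

lemma phi_hasDeriv {α C : ℝ} (hα : α ∈ Ioo (0:ℝ) 1) (hC : 1 < C) {t : ℝ} (ht : 0 < t) :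
    HasDerivAt (phi α C hα hC) (phi α C hα hC t * betaFn α C (phi α C hα hC t)) t := by
  have h1 : 1 < phi α C hα hC t := phi_gt_one hα hC ht
  have hF := FC_hasDeriv hα hC h1
  have hcont : ContinuousAt (phi α C hα hC) t :=
    (phi_contOn hα hC).continuousAt (Ici_mem_nhds ht)
  have hpos : 0 < phi α C hα hC t * betaFn α C (phi α C hα hC t) :=
    mul_pos (by linarith) (beta_pos hC h1)
  have hne : (phi α C hα hC t * betaFn α C (phi α C hα hC t))⁻¹ ≠ 0 :=
    (inv_pos.2 hpos).ne'
  have hev : ∀ᶠ x in nhds t, FC α C (phi α C hα hC x) = x := by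
    filter_upwards [Ioi_mem_nhds ht] with x hx using FC_phi hα hC (le_of_lt hx)
  have h := hF.of_local_left_inverse hcont hne hev
  simpa [inv_inv] using h

lemma phi_solves {α C : ℝ} (hα : α ∈ Ioo (0:ℝ) 1) (hC : 1 < C) {t : ℝ} (ht : 0 ≤ t) :
    phi α C hα hC t = Real.exp (∫ r in (0:ℝ)..t, betaFn α C (phi α C hα hC r)) := by
  have hphipos : 0 < phi α C hα hC t := lt_of_lt_of_le one_pos (phi_mem hα hC ht)
  have hint : ∫ r in (0:ℝ)..t, betaFn α C (phi α C hα hC r) = Real.log (phi α C hα hC t) := by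
    rcases eq_or_lt_of_le ht with h | ht'
    · rw [← h]
      simp [phi_zero hα hC]
    · have hcont : ContinuousOn (fun x => Real.log (phi α C hα hC x)) (Icc 0 t) := by
        apply Real.continuousOn_log.comp ((phi_contOn hα hC).mono Icc_subset_Ici_self)
        intro x hx
        exact (lt_of_lt_of_le one_pos (phi_mem hα hC hx.1)).ne'
      have hderiv : ∀ x ∈ Ioo (0:ℝ) t, HasDerivWithinAt
          (fun x => Real.log (phi α C hα hC x)) (betaFn α C (phi α C hα hC x)) (Ioi x) x := by
        intro x hx
        have hne : phi α C hα hC x ≠ 0 :=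
          (lt_of_lt_of_le one_pos (phi_mem hα hC hx.1.le)).ne'
        have h := (phi_hasDeriv hα hC hx.1).log hne
        rw [mul_div_cancel_left₀ _ hne] at h
        exact h.hasDerivWithinAt
      have hintg : IntervalIntegrable (fun r => betaFn α C (phi α C hα hC r)) volume 0 t := by
        apply ContinuousOn.intervalIntegrable
        rw [uIcc_of_le ht]
        exact (continuous_betaFn hα.1 (by linarith)).comp_continuousOn
          ((phi_contOn hα hC).mono Icc_subset_Ici_self)
      rw [integral_eq_sub_of_hasDeriv_right_of_le ht hcont hderiv hintg,
        phi_zero hα hC, Real.log_one, sub_zero]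
  rw [hint, Real.exp_log hphipos]

lemma phi_ne_one {α C : ℝ} (hα : α ∈ Ioo (0:ℝ) 1) (hC : 1 < C) : phi α C hα hC 1 ≠ 1 := by
  intro h
  have := FC_phi hα hC (zero_le_one)
  rw [h, FC_one] at this
  exact one_ne_zero this.symm

end Stmt15Aux

/-- Non-uniqueness counterexample: for `α ∈ (0,1)` and `C > 1`, the function `β` is
bounded and uniformly continuous with `β(1) = 0` (and `β(r) ≠ 0` for `r ≠ 1`), yet the
integral equation `φ(t) = exp(∫₀ᵗ β(φ(r)) dr)` on `[0,∞)` admits at least two distinct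
solutions: the constant `1` and `φ = F⁻¹` where `F(u) = ∫₁ᵘ dr/(r β(r))` is a
homeomorphism from `[1,∞)` onto `[0,∞)`. -/
theorem stmt_15 (α C : ℝ) (hα : α ∈ Set.Ioo (0:ℝ) 1) (hC : 1 < C) :
    -- β is bounded
    (∃ M : ℝ, ∀ r : ℝ, |betaFn α C r| ≤ M) ∧
    -- β is uniformly continuous
    UniformContinuous (betaFn α C) ∧
    -- β(1) = 0 and β(r) ≠ 0 for r ≠ 1
    betaFn α C 1 = 0 ∧ (∀ r : ℝ, r ≠ 1 → betaFn α C r ≠ 0) ∧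
    -- F is a homeomorphism from [1,∞) onto [0,∞)
    (∀ F : ℝ → ℝ, (∀ u : ℝ, F u = ∫ r in (1:ℝ)..u, (r * betaFn α C r)⁻¹) →
      StrictMonoOn F (Set.Ici (1:ℝ)) ∧ ContinuousOn F (Set.Ici (1:ℝ)) ∧
      F '' Set.Ici (1:ℝ) = Set.Ici (0:ℝ)) ∧
    -- the constant 1 solves the integral equation
    (∀ t : ℝ, 0 ≤ t → Real.exp (∫ r in (0:ℝ)..t, betaFn α C 1) = 1) ∧
    -- and there exists another, distinct, continuous solution
    (∃ φ : ℝ → ℝ, ContinuousOn φ (Set.Ici (0:ℝ)) ∧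
      (∀ t : ℝ, 0 ≤ t → φ t = Real.exp (∫ r in (0:ℝ)..t, betaFn α C (φ r))) ∧
      ∃ t : ℝ, 0 ≤ t ∧ φ t ≠ 1) := by
  refine ⟨⟨max 1 (C ^ α), fun r => Stmt15Aux.beta_bdd hα.1 hC r⟩,
    Stmt15Aux.uc_betaFn hα.1 (by linarith), Stmt15Aux.beta_one hα.1 hC,
    fun r hr => Stmt15Aux.beta_ne hC r hr, ?_, ?_, ?_⟩
  · intro F hF
    have hFC : F = Stmt15Aux.FC α C := funext hF
    rw [hFC]
    exact ⟨Stmt15Aux.FC_strictMono hα hC, Stmt15Aux.FC_contOn hα hC, Stmt15Aux.FC_image hα hC⟩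
  · intro t ht
    rw [Stmt15Aux.beta_one hα.1 hC]
    simp
  · exact ⟨Stmt15Aux.phi α C hα hC, Stmt15Aux.phi_contOn hα hC,
      fun t ht => Stmt15Aux.phi_solves hα hC ht, 1, zero_le_one, Stmt15Aux.phi_ne_one hα hC⟩

end
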